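/- (Lemma 4.1, second part: asymptotics for the twisted Sierpiński gasket.) Let (x_n, y_n)_{n≥0} be a sequence of positive pairs following the explicit twisted recursion with x0 > y0 > 0. Then there exists a constant C > 0 such that for all n ≥ 0: C⁻¹ ≤ x_n ≤ C and C⁻¹·(1/3)^n ≤ y_n ≤ C·(1/3)^n; consequently the conductances a_n = x_n/(y_n(2x_n + y_n)) and b_n = 1/(2x_n + y_n) satisfy C'⁻¹·3^n ≤ a_n ≤ C'·3^n and C'⁻¹ ≤ b_n ≤ C' for some constant C' > 0. -/
import Mathlib


noncomputable section

/-- `M(x, y) = √(9x² − 4xy − 4y²)`. -/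
def MTw (x y : ℝ) : ℝ := Real.sqrt (9 * x ^ 2 - 4 * x * y - 4 * y ^ 2)

/-- A sequence of positive pairs following the explicit twisted recursion. -/
def FollowsTwisted (X Y : ℕ → ℝ) : Prop :=
  (∀ n, 0 < X n ∧ 0 < Y n) ∧
  ∀ n, X (n + 1) = (X n + 2 * Y n + 3 * MTw (X n) (Y n)) / 10 ∧
       Y (n + 1) = (3 * X n + Y n - MTw (X n) (Y n)) / 5

set_option linter.unusedSectionVars false

namespace TwAux

variable {x y : ℝ}

lemma arg_nonneg (hy : 0 < y) (hxy : y < x) : (0:ℝ) ≤ 9 * x ^ 2 - 4 * x * y - 4 * y ^ 2 := by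
  nlinarith

lemma Msq (hy : 0 < y) (hxy : y < x) : (MTw x y) ^ 2 = 9 * x ^ 2 - 4 * x * y - 4 * y ^ 2 :=
  Real.sq_sqrt (arg_nonneg hy hxy)

lemma Mnonneg : 0 ≤ MTw x y := Real.sqrt_nonneg _

/-- M > x -/
lemma M_gt (hy : 0 < y) (hxy : y < x) : x < MTw x y := by
  have h1 := Msq hy hxy
  have h0 := Mnonneg (x := x) (y := y)
  nlinarith [sq_nonneg (MTw x y - x)]

/-- 3M ≤ 9x - 2y -/
lemma M_le (hy : 0 < y) (hxy : y < x) : 3 * MTw x y ≤ 9 * x - 2 * y := by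
  have h1 := Msq hy hxy
  have h0 := Mnonneg (x := x) (y := y)
  nlinarith [sq_nonneg (MTw x y - (9 * x - 2 * y) / 3)]

/-- 3M ≥ 9x - 8y -/
lemma M_ge1 (hy : 0 < y) (hxy : y < x) : 9 * x - 8 * y ≤ 3 * MTw x y := by
  have h1 := Msq hy hxy
  have h0 := Mnonneg (x := x) (y := y)
  rcases le_or_gt (9 * x - 8 * y) 0 with h | h
  · nlinarith
  · nlinarith [sq_nonneg (3 * MTw x y - (9 * x - 8 * y))]

/-- 21 x M ≥ 63x² − 14xy − 40y² -/
lemma M_ge2 (hy : 0 < y) (hxy : y < x) :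
    63 * x ^ 2 - 14 * x * y - 40 * y ^ 2 ≤ 21 * x * MTw x y := by
  have h1 := Msq hy hxy
  have h0 := Mnonneg (x := x) (y := y)
  have hx : 0 < x := hy.trans hxy
  rcases le_or_gt (63 * x ^ 2 - 14 * x * y - 40 * y ^ 2) 0 with h | h
  · nlinarith
  · nlinarith [sq_nonneg (21 * x * MTw x y - (63 * x ^ 2 - 14 * x * y - 40 * y ^ 2)),
      mul_pos hx (mul_pos hx (mul_pos hy hy)), sq_nonneg (x - y), sq_nonneg y,
      mul_nonneg hx.le h0]

/-- if x ≤ 2y : 2M ≥ 7x − 5y -/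
lemma M_ge3 (hy : 0 < y) (hxy : y < x) (h2 : x ≤ 2 * y) : 7 * x - 5 * y ≤ 2 * MTw x y := by
  have h1 := Msq hy hxy
  have h0 := Mnonneg (x := x) (y := y)
  nlinarith [sq_nonneg (2 * MTw x y - (7 * x - 5 * y)), mul_nonneg (sub_nonneg.2 hxy.le) (sub_nonneg.2 (by linarith : 13 * x ≤ 41 * y))]

end TwAux

namespace TwAux2
open TwAux

variable {x y x' y' : ℝ} (hy : 0 < y) (hxy : y < x)
  (hX : x' = (x + 2 * y + 3 * MTw x y) / 10)
  (hY : y' = (3 * x + y - MTw x y) / 5)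

include hy hxy hX hY

lemma c0 : 0 < x' := by
  have hx : 0 < x := hy.trans hxy
  have := Mnonneg (x := x) (y := y)
  rw [hX]; positivity

lemma c1 : 0 < y' := by
  have := M_le hy hxy
  rw [hY]; linarith

lemma c2 : y' < x' := by
  have := M_gt hy hxy
  rw [hX, hY]; linarith

lemma c3 : x' ≤ x := by
  have := M_le hy hxy
  rw [hX]; linarith

lemma c4 : y ≤ 3 * y' := by
  have := M_le hy hxy
  rw [hY]; linarith

lemma c5 : 15 * y' ≤ 11 * y := by
  have := M_ge1 hy hxy
  rw [hY]; linarith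

lemma c6 : 21 * x * y' ≤ 7 * x * y + 8 * y ^ 2 := by
  have := M_ge2 hy hxy
  have hx : 0 < x := hy.trans hxy
  rw [hY]; nlinarith

lemma c7 : 2 * x' + 3 * y' = 2 * x + y := by
  rw [hX, hY]; ring

lemma c8 (h2 : x ≤ 2 * y) : 5 * (x - y) ≤ 4 * (x' - y') := by
  have := M_ge3 hy hxy h2
  rw [hX, hY]; linarith

lemma c9 (h2 : 2 * y ≤ x) : 3 * x * y' ≤ 2 * x' * y := by
  have h6 := c6 hy hxy hX hY
  have h7 := c7 hy hxy hX hY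
  have hx : 0 < x := hy.trans hxy
  have key : 21 * x * (3 * y' * (x + y)) ≤ 21 * x * (2 * x * y + y ^ 2) := by
    nlinarith [mul_le_mul_of_nonneg_right h6 (by positivity : (0:ℝ) ≤ x + y),
      mul_nonneg (mul_nonneg hy.le (sub_nonneg.2 h2)) hx.le,
      mul_nonneg (mul_nonneg hy.le (sub_nonneg.2 h2)) hy.le]
  have key2 : 3 * y' * (x + y) ≤ 2 * x * y + y ^ 2 :=
    le_of_mul_le_mul_left (by linarith) (by positivity : (0:ℝ) < 21 * x)
  have h7y : 2 * x' * y = (2 * x + y - 3 * y') * y := by rw [← h7]; ring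
  rw [h7y]; nlinarith [key2]

lemma c10 (h2 : 2 * y ≤ x) : 3 * y' ≤ x' := by
  have h9 := c9 hy hxy hX hY h2
  have h0 := (c0 hy hxy hX hY)
  have hx : 0 < x := hy.trans hxy
  nlinarith [mul_le_mul_of_nonneg_left h2 h0.le]

lemma c11 (h2 : 9 * y ≤ 2 * x) : 3 * x * y' * (x' + 8 * y') ≤ x' * y * (x + 8 * y) := by
  have h6 := c6 hy hxy hX hY
  have h9 := c9 hy hxy hX hY (by linarith)
  have h0 := (c0 hy hxy hX hY)
  have h1 := (c1 hy hxy hX hY)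
  have hx : 0 < x := hy.trans hxy
  have k1 : 24 * x * y' * y' ≤ 16 * x' * y * y' :=
    by nlinarith [mul_le_mul_of_nonneg_right h9 h1.le]
  have k2 : 21 * x * (3 * x * y' + 16 * y * y') ≤ 21 * x * (x * y + 8 * y ^ 2) := by
    nlinarith [mul_le_mul_of_nonneg_left h6 hx.le,
      mul_le_mul_of_nonneg_left h6 (by positivity : (0:ℝ) ≤ 16 * y / 21),
      mul_nonneg (mul_nonneg hy.le hy.le) (sub_nonneg.2 (by linarith : 4 * y ≤ x))]
  have k3 : 3 * x * y' + 16 * y * y' ≤ x * y + 8 * y ^ 2 :=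
    le_of_mul_le_mul_left (by linarith) (by positivity : (0:ℝ) < 21 * x)
  calc 3 * x * y' * (x' + 8 * y') = x' * (3 * x * y') + 24 * x * y' * y' := by ring
    _ ≤ x' * (3 * x * y') + 16 * x' * y * y' := by linarith
    _ = x' * (3 * x * y' + 16 * y * y') := by ring
    _ ≤ x' * (x * y + 8 * y ^ 2) := by nlinarith [mul_le_mul_of_nonneg_left k3 h0.le]
    _ = x' * y * (x + 8 * y) := by ring

end TwAux2

set_option maxHeartbeats 1000000 in
theorem stmt18 (X Y : ℕ → ℝ) (h : FollowsTwisted X Y) (h0 : Y 0 < X 0)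
    (a b : ℕ → ℝ)
    (ha : ∀ n, a n = X n / (Y n * (2 * X n + Y n)))
    (hb : ∀ n, b n = 1 / (2 * X n + Y n)) :
    (∃ C : ℝ, 0 < C ∧ ∀ n,
      C⁻¹ ≤ X n ∧ X n ≤ C ∧
      C⁻¹ * (1 / 3 : ℝ) ^ n ≤ Y n ∧ Y n ≤ C * (1 / 3 : ℝ) ^ n) ∧
    (∃ C' : ℝ, 0 < C' ∧ ∀ n,
      C'⁻¹ * 3 ^ n ≤ a n ∧ a n ≤ C' * 3 ^ n ∧
      C'⁻¹ ≤ b n ∧ b n ≤ C') := by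
  obtain ⟨hpos, hrec⟩ := h
  have hXpos : ∀ n, 0 < X n := fun n => (hpos n).1
  have hYpos : ∀ n, 0 < Y n := fun n => (hpos n).2
  have hlt : ∀ n, Y n < X n := by
    intro n; induction n with
    | zero => exact h0
    | succ n ih => exact TwAux2.c2 (hYpos n) ih (hrec n).1 (hrec n).2
  have s3 : ∀ n, X (n+1) ≤ X n := fun n => TwAux2.c3 (hYpos n) (hlt n) (hrec n).1 (hrec n).2
  have s4 : ∀ n, Y n ≤ 3 * Y (n+1) := fun n => TwAux2.c4 (hYpos n) (hlt n) (hrec n).1 (hrec n).2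
  have s5 : ∀ n, 15 * Y (n+1) ≤ 11 * Y n := fun n => TwAux2.c5 (hYpos n) (hlt n) (hrec n).1 (hrec n).2
  have s7 : ∀ n, 2 * X (n+1) + 3 * Y (n+1) = 2 * X n + Y n := fun n => TwAux2.c7 (hYpos n) (hlt n) (hrec n).1 (hrec n).2
  have s8 : ∀ n, X n ≤ 2 * Y n → 5 * (X n - Y n) ≤ 4 * (X (n+1) - Y (n+1)) :=
    fun n h2 => TwAux2.c8 (hYpos n) (hlt n) (hrec n).1 (hrec n).2 h2
  have s9 : ∀ n, 2 * Y n ≤ X n → 3 * X n * Y (n+1) ≤ 2 * X (n+1) * Y n :=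
    fun n h2 => TwAux2.c9 (hYpos n) (hlt n) (hrec n).1 (hrec n).2 h2
  have s11 : ∀ n, 9 * Y n ≤ 2 * X n →
      3 * X n * Y (n+1) * (X (n+1) + 8 * Y (n+1)) ≤ X (n+1) * Y n * (X n + 8 * Y n) :=
    fun n h2 => TwAux2.c11 (hYpos n) (hlt n) (hrec n).1 (hrec n).2 h2
  -- global facts
  have hXtop : ∀ n, X n ≤ X 0 := by
    intro n; induction n with
    | zero => exact le_refl _
    | succ n ih => exact (s3 n).trans ih
  have hYlow : ∀ n, Y 0 * (1/3:ℝ)^n ≤ Y n := by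
    intro n; induction n with
    | zero => simp
    | succ n ih =>
      have h4 := s4 n
      rw [pow_succ]
      nlinarith [ih]
  have hG : ∀ n, 4 * X n - 9 * Y n ≤ 4 * X (n+1) - 9 * Y (n+1) := by
    intro n; have := s5 n; have := s7 n; linarith
  have hGmono : ∀ m n, m ≤ n → 4 * X m - 9 * Y m ≤ 4 * X n - 9 * Y n := by
    intro m n hmn
    induction n, hmn using Nat.le_induction with
    | base => exact le_refl _
    | succ n hmn ih => exact ih.trans (hG n)
  -- Stage 1
  have hNex : ∃ N, 2 * Y N ≤ X N := by
    by_contra hc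
    push_neg at hc
    have hgrow : ∀ n, (5/4:ℝ)^n * (X 0 - Y 0) ≤ X n - Y n := by
      intro n; induction n with
      | zero => simp
      | succ n ih =>
        have h8 := s8 n (le_of_lt (hc n))
        rw [pow_succ]
        nlinarith [ih]
    obtain ⟨n, hn⟩ := pow_unbounded_of_one_lt ((X 0)/(X 0 - Y 0)) (by norm_num : (1:ℝ) < 5/4)
    have hd : (0:ℝ) < X 0 - Y 0 := by linarith
    rw [div_lt_iff₀ hd] at hn
    have h1 := hgrow n
    have h2 := hlt n
    have h3 := hXtop n
    have h4 := hYpos n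
    linarith
  obtain ⟨N, hNle⟩ := hNex
  have k1 : 3 * Y (N+1) ≤ X (N+1) := by
    have h9 := s9 N hNle
    nlinarith [hXpos N, mul_nonneg (hXpos (N+1)).le (sub_nonneg.2 hNle)]
  have h92 : 9 * Y (N+2) ≤ 2 * X (N+2) := by
    have h9 := s9 (N+1) (by linarith [hYpos (N+1)])
    nlinarith [hXpos (N+1), mul_nonneg (hXpos (N+2)).le (sub_nonneg.2 k1)]
  set N2 := N + 2 with hN2def
  -- region invariance
  have hreg : ∀ k, 9 * Y (N2+k) ≤ 2 * X (N2+k) := by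
    intro k; induction k with
    | zero => simpa using h92
    | succ k ih =>
      have h9 := s9 (N2+k) (by nlinarith [hYpos (N2+k)])
      show 9 * Y ((N2+k)+1) ≤ 2 * X ((N2+k)+1)
      nlinarith [hXpos (N2+k), mul_nonneg (hXpos (N2+k+1)).le (hYpos (N2+k)).le,
        mul_nonneg (hXpos (N2+k+1)).le (sub_nonneg.2 ih)]
  -- W decreasing
  have hW : ∀ k, (3:ℝ)^k * Y (N2+k) * ((X (N2+k) + 8 * Y (N2+k)) / X (N2+k)) ≤
      Y N2 * ((X N2 + 8 * Y N2) / X N2) := by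
    intro k; induction k with
    | zero => simp
    | succ k ih =>
      refine le_trans ?_ ih
      have h11 := s11 (N2+k) (hreg k)
      have hx1 : (0:ℝ) < X (N2+k) := hXpos _
      have hx2 : (0:ℝ) < X (N2+k+1) := hXpos _
      have key : 3 * Y (N2+k+1) * ((X (N2+k+1) + 8 * Y (N2+k+1)) / X (N2+k+1)) ≤
          Y (N2+k) * ((X (N2+k) + 8 * Y (N2+k)) / X (N2+k)) := by
        rw [mul_div_assoc' , mul_div_assoc', div_le_div_iff₀ hx2 hx1]
        nlinarith [h11]
      have hp : (0:ℝ) ≤ (3:ℝ)^k := by positivity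
      calc (3:ℝ)^(k+1) * Y (N2+(k+1)) * ((X (N2+(k+1)) + 8 * Y (N2+(k+1))) / X (N2+(k+1)))
          = (3:ℝ)^k * (3 * Y (N2+k+1) * ((X (N2+k+1) + 8 * Y (N2+k+1)) / X (N2+k+1))) := by
            rw [pow_succ]; ring_nf
        _ ≤ (3:ℝ)^k * (Y (N2+k) * ((X (N2+k) + 8 * Y (N2+k)) / X (N2+k))) :=
            mul_le_mul_of_nonneg_left key hp
        _ = (3:ℝ)^k * Y (N2+k) * ((X (N2+k) + 8 * Y (N2+k)) / X (N2+k)) := by ring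
  -- global upper for 3^n Y n
  have D0pos : (0:ℝ) < Y N2 * ((X N2 + 8 * Y N2) / X N2) := by
    have := hXpos N2; have := hYpos N2; positivity
  have hWlow : ∀ k, (3:ℝ)^k * Y (N2+k) ≤ Y N2 * ((X N2 + 8 * Y N2) / X N2) := by
    intro k
    refine le_trans ?_ (hW k)
    have hx : (0:ℝ) < X (N2+k) := hXpos _
    have hy : (0:ℝ) < Y (N2+k) := hYpos _
    have h1 : (1:ℝ) ≤ (X (N2+k) + 8 * Y (N2+k)) / X (N2+k) := by
      rw [le_div_iff₀ hx]; nlinarith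
    have h2 : (0:ℝ) ≤ (3:ℝ)^k * Y (N2+k) := by positivity
    nlinarith [mul_le_mul_of_nonneg_left h1 h2]
  obtain ⟨m1, hm1mem, hm1⟩ := Finset.exists_max_image (Finset.range (N2+1))
    (fun n => (3:ℝ)^n * Y n) ⟨0, Finset.mem_range.2 (Nat.succ_pos _)⟩
  set D : ℝ := max ((3:ℝ)^m1 * Y m1) ((3:ℝ)^N2 * (Y N2 * ((X N2 + 8 * Y N2) / X N2))) with hD
  have hDpos : 0 < D := by
    have h1 := hYpos m1
    exact lt_max_of_lt_left (by positivity)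
  have hYup : ∀ n, (3:ℝ)^n * Y n ≤ D := by
    intro n
    rcases le_or_gt n N2 with hn | hn
    · exact le_max_of_le_left (hm1 n (Finset.mem_range.2 (Nat.lt_succ_of_le hn)))
    · obtain ⟨k, rfl⟩ := Nat.exists_eq_add_of_le hn.le
      refine le_max_of_le_right ?_
      rw [pow_add, mul_assoc]
      exact mul_le_mul_of_nonneg_left (hWlow k) (by positivity)
  -- global lower for X
  obtain ⟨m2, hm2mem, hm2⟩ := Finset.exists_min_image (Finset.range (N2+1))
    (fun n => X n) ⟨0, Finset.mem_range.2 (Nat.succ_pos _)⟩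
  set cL : ℝ := min (X N2 / 2) (X m2) with hcL
  have hcLpos : 0 < cL := lt_min (by linarith [hXpos N2]) (hXpos m2)
  have hXlow : ∀ n, cL ≤ X n := by
    intro n
    rcases le_or_gt n N2 with hn | hn
    · exact le_trans (min_le_right _ _) (hm2 n (Finset.mem_range.2 (Nat.lt_succ_of_le hn)))
    · refine le_trans (min_le_left _ _) ?_
      have hg := hGmono N2 n hn.le
      have hy := hYpos n
      have h92' : 9 * Y N2 ≤ 2 * X N2 := by simpa using hreg 0
      linarith
  -- the constant for the first part
  set C : ℝ := max (max (X 0) (Y 0)⁻¹) (max (max cL⁻¹ D) 1) with hCdef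
  have hC1 : (1:ℝ) ≤ C := le_max_of_le_right (le_max_right _ _)
  have hCpos : (0:ℝ) < C := lt_of_lt_of_le one_pos hC1
  have hCX0 : X 0 ≤ C := le_max_of_le_left (le_max_left _ _)
  have hCY0 : (Y 0)⁻¹ ≤ C := le_max_of_le_left (le_max_right _ _)
  have hCcL : cL⁻¹ ≤ C := le_max_of_le_right (le_max_of_le_left (le_max_left _ _))
  have hCD : D ≤ C := le_max_of_le_right (le_max_of_le_left (le_max_right _ _))
  have hinvcL : C⁻¹ ≤ cL := by
    calc C⁻¹ ≤ (cL⁻¹)⁻¹ := inv_anti₀ (by positivity) hCcL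
      _ = cL := inv_inv _
  have hinvY0 : C⁻¹ ≤ Y 0 := by
    calc C⁻¹ ≤ ((Y 0)⁻¹)⁻¹ := inv_anti₀ (by have := hYpos 0; positivity) hCY0
      _ = Y 0 := inv_inv _
  have main1 : ∀ n, C⁻¹ ≤ X n ∧ X n ≤ C ∧
      C⁻¹ * (1/3:ℝ)^n ≤ Y n ∧ Y n ≤ C * (1/3:ℝ)^n := by
    intro n
    have hp : (0:ℝ) < 3^n := by positivity
    have hq : (1/3:ℝ)^n = ((3:ℝ)^n)⁻¹ := by rw [one_div, inv_pow]
    refine ⟨hinvcL.trans (hXlow n), (hXtop n).trans hCX0, ?_, ?_⟩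
    · exact mul_le_mul_of_nonneg_right hinvY0 (by positivity) |>.trans (hYlow n)
    · have h1 : Y n ≤ D * (1/3:ℝ)^n := by
        rw [hq, ← div_eq_mul_inv, le_div_iff₀ hp]
        nlinarith [hYup n]
      exact h1.trans (mul_le_mul_of_nonneg_right hCD (by positivity))
  refine ⟨⟨C, hCpos, main1⟩, ⟨3 * C^3, by positivity, ?_⟩⟩
  intro n
  obtain ⟨hx1, hx2, hy1, hy2⟩ := main1 n
  have hp : (0:ℝ) < 3^n := by positivity
  have hp1 : (1:ℝ) ≤ (3:ℝ)^n := by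
    have h := pow_le_pow_left₀ (by norm_num : (0:ℝ) ≤ 1) (by norm_num : (1:ℝ) ≤ 3) n
    simpa using h
  have hq : (1/3:ℝ)^n = ((3:ℝ)^n)⁻¹ := by rw [one_div, inv_pow]
  rw [hq] at hy1 hy2
  have hxn := hXpos n
  have hyn := hYpos n
  have hdpos : (0:ℝ) < 2 * X n + Y n := by linarith
  have hinvC : (0:ℝ) < C⁻¹ := by positivity
  have hdlow : 2 * C⁻¹ ≤ 2 * X n + Y n := by linarith
  have hpinv1 : ((3:ℝ)^n)⁻¹ ≤ 1 := by
    exact inv_le_one_of_one_le₀ hp1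
  have hyC : Y n ≤ C := hy2.trans (mul_le_of_le_one_right hCpos.le hpinv1)
  have hdup : 2 * X n + Y n ≤ 3 * C := by linarith
  have hCC3 : 3 * C ≤ 3 * C^3 := by nlinarith [mul_nonneg (mul_nonneg hCpos.le (sub_nonneg.2 hC1)) (by linarith : (0:ℝ) ≤ C + 1)]
  constructor
  · -- lower bound for a
    rw [ha n]
    have hepos : (0:ℝ) < Y n * (2 * X n + Y n) := by positivity
    have heup : Y n * (2 * X n + Y n) ≤ (C * ((3:ℝ)^n)⁻¹) * (3 * C) := by
      apply mul_le_mul hy2 hdup hdpos.le (by positivity)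
    have key : C⁻¹ / ((C * ((3:ℝ)^n)⁻¹) * (3 * C)) ≤ X n / (Y n * (2 * X n + Y n)) :=
      div_le_div₀ hxn.le hx1 hepos heup
    calc (3 * C^3)⁻¹ * 3^n = C⁻¹ / ((C * ((3:ℝ)^n)⁻¹) * (3 * C)) := by
          field_simp
      _ ≤ X n / (Y n * (2 * X n + Y n)) := key
  constructor
  · -- upper bound for a
    rw [ha n]
    have helow : (2 * C⁻¹) * (C⁻¹ * ((3:ℝ)^n)⁻¹) ≤ Y n * (2 * X n + Y n) := by
      have := mul_le_mul hy1 hdlow (by positivity) hyn.le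
      nlinarith [this]
    have hel : (0:ℝ) < (2 * C⁻¹) * (C⁻¹ * ((3:ℝ)^n)⁻¹) := by positivity
    have key : X n / (Y n * (2 * X n + Y n)) ≤ C / ((2 * C⁻¹) * (C⁻¹ * ((3:ℝ)^n)⁻¹)) :=
      div_le_div₀ hCpos.le hx2 hel helow
    have keq : C / ((2 * C⁻¹) * (C⁻¹ * ((3:ℝ)^n)⁻¹)) = (C^3 / 2) * 3^n := by
      field_simp
    calc X n / (Y n * (2 * X n + Y n)) ≤ (C^3 / 2) * 3^n := by rw [← keq]; exact key
      _ ≤ 3 * C^3 * 3^n := by nlinarith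
  constructor
  · -- lower bound for b
    rw [hb n]
    have k1 : 1 / (3 * C) ≤ 1 / (2 * X n + Y n) := one_div_le_one_div_of_le hdpos hdup
    have k2 : (3 * C^3)⁻¹ ≤ 1 / (3 * C) := by
      rw [one_div]
      exact inv_anti₀ (by positivity) hCC3
    exact k2.trans k1
  · -- upper bound for b
    rw [hb n]
    have k1 : 1 / (2 * X n + Y n) ≤ 1 / (2 * C⁻¹) := one_div_le_one_div_of_le (by positivity) hdlow
    have k2 : 1 / (2 * C⁻¹) = C / 2 := by field_simp
    calc 1 / (2 * X n + Y n) ≤ C / 2 := by rw [← k2]; exact k1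
      _ ≤ 3 * C^3 := by nlinarith
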